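/- For all n, k ≥ 0, U_r(n+k,n) = h_k(r, 1²+r, 2²+r, ..., n²+r), where h_k is the complete homogeneous symmetric polynomial of degree k in the n+1 values j²+r, j = 0,...,n. -/

import Mathlib

/-!
Along the diagonal `k ↦ U_r(n + k, n)` the defining recurrence of `U_r` reads
`U_r(n+1+k+1, n+1) = U_r(n+k+1, n) + ((n+1)² + r) · U_r(n+1+k, n+1)`.
The complete homogeneous polynomials `h_k(x₀, …, xₙ)` obey the same recurrence, obtained by
splitting the multisets of size `k + 1` on `{0, …, n+1}` according to whether they contain
`n + 1`, and both sides agree on the boundary: `U_r(n, n) = 1 = h₀` and `U_r(k, 0) = r^k = h_k(r)`.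
-/

/-- `centralU r n k` is the r-central factorial number with even indices of the second kind. -/
def centralU (r : ℕ) : ℕ → ℕ → ℤ
  | 0, 0 => 1
  | 0, _ + 1 => 0
  | n + 1, 0 => (r : ℤ) ^ (n + 1)
  | n + 1, k + 1 => centralU r n k + (((k : ℤ) + 1) ^ 2 + r) * centralU r n (k + 1)

namespace Finset

variable {α : Type*} [DecidableEq α]

lemma sym_insert_succ (a : α) (s : Finset α) (k : ℕ) :
    (insert a s).sym (k + 1) = s.sym (k + 1) ∪ ((insert a s).sym k).image (Sym.cons a) := by
  ext m
  simp only [mem_union, mem_image, mem_sym_iff, mem_insert]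
  constructor
  · intro hm
    by_cases ham : a ∈ m
    · exact Or.inr ⟨m.erase a ham, fun b hb => hm b (Multiset.mem_of_mem_erase hb),
        Sym.cons_erase ham⟩
    · exact Or.inl fun b hb => (hm b hb).resolve_left (ne_of_mem_of_not_mem hb ham)
  · rintro (hm | ⟨m', hm', rfl⟩) b hb
    · exact Or.inr (hm b hb)
    · obtain rfl | hb := Sym.mem_cons.mp hb
      exacts [Or.inl rfl, hm' b hb]

lemma sum_sym_insert_succ {R : Type*} [CommSemiring R] {a : α} {s : Finset α} (ha : a ∉ s)
    (k : ℕ) (g : α → R) :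
    ∑ m ∈ (insert a s).sym (k + 1), ((m : Multiset α).map g).prod =
      ∑ m ∈ s.sym (k + 1), ((m : Multiset α).map g).prod +
        g a * ∑ m ∈ (insert a s).sym k, ((m : Multiset α).map g).prod := by
  have hdisj : Disjoint (s.sym (k + 1)) (((insert a s).sym k).image (Sym.cons a)) := by
    refine disjoint_right.mpr fun m hm hms => ?_
    obtain ⟨m', -, rfl⟩ := mem_image.mp hm
    exact ha (mem_sym_iff.mp hms a (Sym.mem_cons_self a m'))
  rw [sym_insert_succ, sum_union hdisj, sum_image fun x _ y _ => (Sym.cons_inj_right a x y).mp,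
    mul_sum]
  simp only [Sym.coe_cons, Multiset.map_cons, Multiset.prod_cons]

end Finset

lemma centralU_eq_zero_of_lt (r : ℕ) {n k : ℕ} (h : n < k) : centralU r n k = 0 := by
  induction n generalizing k with
  | zero => obtain _ | k := k <;> [omega; rfl]
  | succ n ih =>
    obtain _ | k := k
    · omega
    · rw [centralU, ih (by omega), ih (by omega), mul_zero, add_zero]

lemma centralU_self (r n : ℕ) : centralU r n n = 1 := by
  induction n with
  | zero => rfl
  | succ n ih => rw [centralU, ih, centralU_eq_zero_of_lt r n.lt_succ_self, mul_zero, add_zero]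

lemma centralU_zero_right (r n : ℕ) : centralU r n 0 = (r : ℤ) ^ n := by
  cases n <;> rfl

theorem centralU_eq_hsymm (r n k : ℕ) :
    centralU r (n + k) n =
      ∑ m ∈ (Finset.range (n + 1)).sym k,
        ((m : Multiset ℕ).map fun j => ((j : ℤ) ^ 2 + r)).prod := by
  -- the cast `Multiset ℕ → Multiset ℤ` in the statement elaborates to a monadic lift
  simp only [Bind.bind, Pure.pure, Multiset.bind_singleton, Multiset.map_map]
  induction k generalizing n with
  | zero => rw [Nat.add_zero, centralU_self, Finset.sym_zero, Finset.sum_singleton]; rfl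
  | succ k ihk =>
    induction n with
    | zero =>
      rw [zero_add, centralU_zero_right, Finset.range_one, Finset.sym_singleton,
        Finset.sum_singleton, Sym.coe_replicate, Multiset.map_replicate, Multiset.prod_replicate]
      simp
    | succ n ihn =>
      rw [Finset.range_add_one, Finset.sum_sym_insert_succ Finset.notMem_range_self,
        ← Finset.range_add_one, ← ihn, ← ihk,
        show n + 1 + (k + 1) = n + (k + 1) + 1 by omega, centralU,
        show n + 1 + k = n + (k + 1) by omega]
      simp only [Function.comp_apply, Nat.cast_succ]
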